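/- arXiv:1409.5348 — 3 statements merged into one kernel-verified Lean document; each statement's English description precedes it below -/
import Mathlib

section
/- Let N ≥ 2 be an integer, 0 ≤ δ < R, λ ≥ 0, and let f satisfy (A1) and (A4). Let u ∈ C¹([δ,R]) with |u'(r)| < 1 for all r be such that r ↦ r^{N−1}φ₁(u'(r)) is continuously differentiable and (r^{N−1}φ₁(u'))' + λ r^{N−1} f(r,u) = 0 on (δ,R). If u(r₀) = u'(r₀) = 0 for some r₀ ∈ (δ,R], then u ≡ 0 on [δ,R]. -/
open Set Filter Topology

/-- `φ₁(s) = s / √(1 - s²)`. -/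
noncomputable def phi1 (s : ℝ) : ℝ := s / Real.sqrt (1 - s ^ 2)

/-- Condition (A1): `f : [0,R] × (-α,α) → ℝ` is continuous, `R < α ≤ ∞`, and
`f(r,s) s > 0` for `r ∈ [0,R]` and `0 < |s| < α`. -/
def CondA1 (R : ℝ) (α : EReal) (f : ℝ → ℝ → ℝ) : Prop :=
  (R : EReal) < α ∧
  ContinuousOn (fun p : ℝ × ℝ => f p.1 p.2)
    {p : ℝ × ℝ | p.1 ∈ Icc 0 R ∧ ((|p.2| : ℝ) : EReal) < α} ∧
  ∀ r ∈ Icc 0 R, ∀ s : ℝ, ((|s| : ℝ) : EReal) < α → s ≠ 0 → 0 < f r s * s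

/-- Condition (A2): `f(r,s)/s → m(r)` as `s → 0`, uniformly in `r ∈ [δ,R]`, with
`m` continuous, nonnegative, and not identically zero on any nondegenerate
subinterval of `[δ,R]`. -/
def CondA2 (δ R : ℝ) (f : ℝ → ℝ → ℝ) (m : ℝ → ℝ) : Prop :=
  ContinuousOn m (Icc δ R) ∧
  (∀ r ∈ Icc δ R, 0 ≤ m r) ∧
  (∀ a b : ℝ, δ ≤ a → a < b → b ≤ R → ∃ r ∈ Icc a b, m r ≠ 0) ∧
  ∀ ε : ℝ, 0 < ε → ∃ η : ℝ, 0 < η ∧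
    ∀ r ∈ Icc δ R, ∀ s : ℝ, s ≠ 0 → |s| < η → |f r s / s - m r| < ε

/-- Condition (A3): `f(r,0) = 0` and `f(r,s)/φ₁(s) → ∞` as `s → 0`, uniformly in
`r ∈ [δ,R]`. -/
def CondA3 (δ R : ℝ) (f : ℝ → ℝ → ℝ) : Prop :=
  (∀ r ∈ Icc δ R, f r 0 = 0) ∧
  ∀ M : ℝ, ∃ η : ℝ, 0 < η ∧
    ∀ r ∈ Icc δ R, ∀ s : ℝ, s ≠ 0 → |s| < η → M < f r s / phi1 s

/-- Condition (A4): `F(r,s) = ∫₀^s f(r,x) dx` is differentiable in `r ∈ [δ,R]` and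
`|∂F/∂r(r,s)| ≤ ω(r) F(r,s)` for a continuous nonnegative `ω`. -/
def CondA4 (δ R : ℝ) (α : EReal) (f : ℝ → ℝ → ℝ) : Prop :=
  ∃ Fr : ℝ → ℝ → ℝ, ∃ ω : ℝ → ℝ,
    ContinuousOn ω (Icc δ R) ∧ (∀ r ∈ Icc δ R, 0 ≤ ω r) ∧
    ∀ s : ℝ, ((|s| : ℝ) : EReal) < α →
      (∀ r ∈ Icc δ R,
        HasDerivWithinAt (fun t => ∫ x in (0:ℝ)..s, f t x) (Fr r s) (Icc δ R) r) ∧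
      (∀ r ∈ Icc δ R, |Fr r s| ≤ ω r * ∫ x in (0:ℝ)..s, f r x)

/-- `u` (with derivative `u'`) is a solution of problem `(P)_{δ,λ}`:
`u ∈ C¹([δ,R])`, `|u'| < 1`, `r ↦ r^{N-1} φ₁(u'(r))` is continuously
differentiable, `(r^{N-1} φ₁(u'))' + λ r^{N-1} f(r,u) = 0` on `(δ,R)`, and
`u'(δ) = 0 = u(R)`. -/
def IsSolP (N : ℕ) (δ R lam : ℝ) (f : ℝ → ℝ → ℝ) (u u' : ℝ → ℝ) : Prop :=
  (∀ r ∈ Icc δ R, HasDerivWithinAt u (u' r) (Icc δ R) r) ∧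
  ContinuousOn u' (Icc δ R) ∧
  (∀ r ∈ Icc δ R, |u' r| < 1) ∧
  (∃ w' : ℝ → ℝ, ContinuousOn w' (Icc δ R) ∧
    (∀ r ∈ Icc δ R,
      HasDerivWithinAt (fun t => t ^ (N - 1) * phi1 (u' t)) (w' r) (Icc δ R) r) ∧
    ∀ r ∈ Ioo δ R, w' r + lam * r ^ (N - 1) * f r (u r) = 0) ∧
  u' δ = 0 ∧ u R = 0

/-- `u ∈ S^ν_{k,δ}`: `u'(δ) = u(R) = 0`, `u` has exactly `k-1` zeros in `(δ,R)`,
all simple (`u' ≠ 0` there), and `ν u > 0` on some interval `(δ, δ+σ)`. -/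
def InS (δ R : ℝ) (k : ℕ) (ν : ℝ) (u u' : ℝ → ℝ) : Prop :=
  u' δ = 0 ∧ u R = 0 ∧
  (∃ Z : Finset ℝ, Z.card = k - 1 ∧
    (∀ r : ℝ, r ∈ Z ↔ r ∈ Ioo δ R ∧ u r = 0) ∧
    ∀ r ∈ Z, u' r ≠ 0) ∧
  ∃ σ : ℝ, 0 < σ ∧ ∀ r ∈ Ioo δ (δ + σ), 0 < ν * u r

/-- `w` (with derivative `w'`) is a solution of the linear problem
`-(r^{N-1} w')' = λ r^{N-1} m(r) w` on `(δ,R)` with `w'(δ) = w(R) = 0`. -/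
def IsLinSol (N : ℕ) (δ R lam : ℝ) (m : ℝ → ℝ) (w w' : ℝ → ℝ) : Prop :=
  (∀ r ∈ Icc δ R, HasDerivWithinAt w (w' r) (Icc δ R) r) ∧
  ContinuousOn w' (Icc δ R) ∧
  (∃ g : ℝ → ℝ, ContinuousOn g (Icc δ R) ∧
    (∀ r ∈ Icc δ R,
      HasDerivWithinAt (fun t => t ^ (N - 1) * w' t) (g r) (Icc δ R) r) ∧
    ∀ r ∈ Ioo δ R, -g r = lam * r ^ (N - 1) * m r * w r) ∧
  w' δ = 0 ∧ w R = 0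

/-- `lam` is the `k`-th eigenvalue of the linear problem: it is positive and the
problem admits a nontrivial solution having exactly `k-1` simple zeros in
`(δ,R)`. -/
def IsKthEigen (N : ℕ) (δ R : ℝ) (m : ℝ → ℝ) (k : ℕ) (lam : ℝ) : Prop :=
  0 < lam ∧
  ∃ w w' : ℝ → ℝ, IsLinSol N δ R lam m w w' ∧ (∃ r ∈ Icc δ R, w r ≠ 0) ∧
    ∃ Z : Finset ℝ, Z.card = k - 1 ∧
      (∀ r : ℝ, r ∈ Z ↔ r ∈ Ioo δ R ∧ w r = 0) ∧
      ∀ r ∈ Z, w' r ≠ 0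

/-- The function `h(y) = (1-y²)^{3/2}` for `|y| ≤ 1`, `h(y) = 0` otherwise. -/
noncomputable def hcap (y : ℝ) : ℝ := if |y| ≤ 1 then (1 - y ^ 2) ^ ((3 : ℝ) / 2) else 0

/-- `φ₁⁻¹(y) = y / √(1 + y²)`, the inverse of `φ₁`. -/
noncomputable def phi1inv (y : ℝ) : ℝ := y / Real.sqrt (1 + y ^ 2)

/-- `Σ_δ`: the closure, in `ℝ × C¹([δ,R])` (realized as `ℝ × (C([δ,R]) × C([δ,R]))`
via `u ↦ (u, u')`), of the set of pairs `(λ, u)` with `λ ≥ 0` and `u` a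
nontrivial solution of `(P)_{δ,λ}`. -/
noncomputable def SigmaSet (N : ℕ) (δ R : ℝ) (f : ℝ → ℝ → ℝ) :
    Set (ℝ × (ContinuousMap (Icc δ R) ℝ × ContinuousMap (Icc δ R) ℝ)) :=
  closure {p | 0 ≤ p.1 ∧ ∃ u u' : ℝ → ℝ,
    IsSolP N δ R p.1 f u u' ∧
    (∀ x : Icc δ R, p.2.1 x = u x ∧ p.2.2 x = u' x) ∧
    ∃ r ∈ Icc δ R, u r ≠ 0}

/-! Since `|u'| < 1` and `u(r₀) = 0`, `u` takes values in `[-R, R] ⊂ (-α, α)`, where (A1) and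
(A4) apply. The energy `E(t) = λ F(t, u(t)) + Φ*(φ₁(u'(t)))`, with `Φ*(v) = √(1 + v²) - 1`, is
nonnegative and, by the equation, `E' = λ ∂F/∂r - (N - 1)/t · u' φ₁(u')`. By (A4) and
`0 ≤ s φ₁(s) ≤ 2 Φ*(φ₁(s))` this gives `|E'| ≤ K E` on every `[a, R]` with `a > δ`, so `E`, which
vanishes at `r₀`, vanishes identically there by Gronwall's argument. Hence `u' = 0` on `(δ, R]`
and `u ≡ u(r₀) = 0`. -/

theorem phi1inv_phi1 {s : ℝ} (hs : |s| < 1) : phi1inv (phi1 s) = s := by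
  have hs2 : s ^ 2 < 1 := by nlinarith [sq_abs s, abs_nonneg s]
  have hpos : 0 < √(1 - s ^ 2) := Real.sqrt_pos.2 (by linarith)
  have hsq : 1 + phi1 s ^ 2 = (1 / √(1 - s ^ 2)) ^ 2 := by
    have hne : 1 - s ^ 2 ≠ 0 := by linarith
    rw [phi1, div_pow, div_pow, Real.sq_sqrt (by linarith)]
    field_simp
    ring
  rw [phi1inv, hsq, Real.sqrt_sq (by positivity), phi1]
  field_simp

theorem phi1_eq_zero_iff {s : ℝ} (hs : |s| < 1) : phi1 s = 0 ↔ s = 0 := by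
  have hs2 : s ^ 2 < 1 := by nlinarith [sq_abs s, abs_nonneg s]
  rw [phi1, div_eq_zero_iff, or_iff_left (Real.sqrt_pos.2 (by linarith)).ne']

/-- The Legendre conjugate of `Φ(s) = 1 - √(1 - s²)`, the primitive of `φ₁`. -/
noncomputable def phiStar (v : ℝ) : ℝ := √(1 + v ^ 2) - 1

theorem one_le_sqrt_one_add_sq (v : ℝ) : 1 ≤ √(1 + v ^ 2) :=
  Real.one_le_sqrt.2 (by nlinarith [sq_nonneg v])

theorem phiStar_nonneg (v : ℝ) : 0 ≤ phiStar v :=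
  sub_nonneg.2 (one_le_sqrt_one_add_sq v)

theorem phiStar_eq_zero_iff {v : ℝ} : phiStar v = 0 ↔ v = 0 := by
  rw [phiStar, sub_eq_zero, Real.sqrt_eq_one]
  constructor <;> intro h <;> nlinarith [sq_nonneg v]

theorem hasDerivAt_phiStar (v : ℝ) : HasDerivAt phiStar (phi1inv v) v := by
  have hpos : (0 : ℝ) < 1 + v ^ 2 := by positivity
  show HasDerivAt (fun x => √(1 + x ^ 2) - 1) _ v
  refine ((((hasDerivAt_pow 2 v).const_add 1).sqrt hpos.ne').sub_const 1).congr_deriv ?_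
  rw [phi1inv]
  field_simp
  norm_num

theorem phi1inv_mul_self_nonneg (v : ℝ) : 0 ≤ phi1inv v * v := by
  rw [phi1inv, div_mul_eq_mul_div]
  exact div_nonneg (mul_self_nonneg v) (Real.sqrt_nonneg _)

theorem phi1inv_mul_self_le (v : ℝ) : phi1inv v * v ≤ 2 * phiStar v := by
  have hw := one_le_sqrt_one_add_sq v
  have hw2 : √(1 + v ^ 2) ^ 2 = 1 + v ^ 2 := Real.sq_sqrt (by positivity)
  rw [phi1inv, phiStar, div_mul_eq_mul_div, div_le_iff₀ (by linarith)]
  nlinarith [sq_nonneg (√(1 + v ^ 2) - 1)]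

theorem HasDerivWithinAt.of_pow_mul {v : ℝ → ℝ} {s : Set ℝ} {w r : ℝ} (n : ℕ) (hr : r ≠ 0)
    (h : HasDerivWithinAt (fun t => t ^ n * v t) w s r) :
    HasDerivWithinAt v (w / r ^ n - n / r * v r) s r := by
  have hquot := h.div (hasDerivAt_pow n r).hasDerivWithinAt (pow_ne_zero n hr)
  have hv : (fun t => t ^ n * v t / t ^ n) =ᶠ[𝓝[s] r] v := by
    filter_upwards [nhdsWithin_le_nhds (isOpen_ne.mem_nhds hr)] with t ht
    field_simp [pow_ne_zero n ht]
  refine (hquot.congr_of_eventuallyEq hv.symm (by simp [hr])).congr_deriv ?_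
  cases n with
  | zero => simp
  | succ n =>
    rw [Nat.add_sub_cancel, pow_succ]
    field_simp

theorem integral_nonneg_of_mul_self_nonneg {f : ℝ → ℝ} {s : ℝ}
    (hf : ∀ x ∈ uIcc 0 s, 0 ≤ f x * x) : 0 ≤ ∫ x in (0 : ℝ)..s, f x := by
  rcases le_total 0 s with hs | hs
  · rw [intervalIntegral.integral_of_le hs]
    refine MeasureTheory.setIntegral_nonneg measurableSet_Ioc fun x hx => ?_
    exact nonneg_of_mul_nonneg_left (hf x (Ioc_subset_Icc_self.trans Icc_subset_uIcc hx)) hx.1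
  · rw [intervalIntegral.integral_symm, intervalIntegral.integral_of_le hs,
      MeasureTheory.integral_Ioc_eq_integral_Ioo, neg_nonneg]
    refine MeasureTheory.setIntegral_nonpos measurableSet_Ioo fun x hx => ?_
    exact nonpos_of_mul_nonneg_left (hf x (Ioo_subset_Icc_self.trans Icc_subset_uIcc' hx)) hx.2

theorem hasDerivWithinAt_integral_apply_comp {f : ℝ → ℝ → ℝ} {u : ℝ → ℝ} {s K : Set ℝ}
    {r Fr u'r : ℝ} (hf : ContinuousOn (fun p : ℝ × ℝ => f p.1 p.2) (s ×ˢ K))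
    (hK : K.OrdConnected) (hK0 : (0 : ℝ) ∈ K) (huK : MapsTo u s K) (hr : r ∈ s)
    (hFr : HasDerivWithinAt (fun t => ∫ x in (0 : ℝ)..u r, f t x) Fr s r)
    (hu : HasDerivWithinAt u u'r s r) :
    HasDerivWithinAt (fun t => ∫ x in (0 : ℝ)..u t, f t x) (Fr + f r (u r) * u'r) s r := by
  set A : ℝ → ℝ := fun t => ∫ x in u r..u t, (f t x - f r (u r))
  have hint : ∀ t ∈ s, ∀ a ∈ K, ∀ b ∈ K, IntervalIntegrable (f t) MeasureTheory.volume a b :=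
    fun t ht a ha b hb => ContinuousOn.intervalIntegrable <|
      (hf.comp (continuousOn_const.prodMk continuousOn_id) fun x hx => ⟨ht, hx⟩).mono
        (hK.uIcc_subset ha hb)
  have hsplit : ∀ t ∈ s, ∫ x in (0 : ℝ)..u t, f t x
      = (∫ x in (0 : ℝ)..u r, f t x) + (A t + f r (u r) * (u t - u r)) := by
    intro t ht
    rw [← intervalIntegral.integral_add_adjacent_intervals (hint t ht 0 hK0 (u r) (huK hr))
      (hint t ht _ (huK hr) _ (huK ht))]
    simp only [A]
    rw [intervalIntegral.integral_sub (hint t ht _ (huK hr) _ (huK ht)) intervalIntegrable_const,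
      intervalIntegral.integral_const, smul_eq_mul]
    ring
  have hA : HasDerivWithinAt A 0 s r := by
    rw [hasDerivWithinAt_iff_isLittleO]
    simp only [A, intervalIntegral.integral_same, sub_zero, smul_zero]
    refine Asymptotics.IsLittleO.trans_isBigO ?_ hu.hasFDerivWithinAt.isBigO_sub
    refine Asymptotics.isLittleO_iff.2 fun c hc => ?_
    obtain ⟨ρ, hρ, hball⟩ := Metric.continuousWithinAt_iff.1 (hf (r, u r) ⟨hr, huK hr⟩) c hc
    filter_upwards [self_mem_nhdsWithin, nhdsWithin_le_nhds (Metric.ball_mem_nhds r hρ),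
      hu.continuousWithinAt.tendsto (Metric.ball_mem_nhds (u r) hρ)] with t ht htr hut
    rw [Real.norm_eq_abs (u t - u r)]
    refine intervalIntegral.norm_integral_le_of_norm_le_const
      fun x (hx : x ∈ uIoc (u r) (u t)) => ?_
    have hx' := uIoc_subset_uIcc hx
    refine (hball (x := (t, x)) ⟨ht, hK.uIcc_subset (huK hr) (huK ht) hx'⟩ ?_).le
    rw [Prod.dist_eq, max_lt_iff]
    have hut' : |u t - u r| < ρ := hut
    exact ⟨htr, (abs_sub_left_of_mem_uIcc hx').trans_lt hut'⟩
  have hlin : HasDerivWithinAt (fun t => f r (u r) * (u t - u r)) (f r (u r) * u'r) s r :=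
    (hu.sub_const _).const_mul _
  exact (hFr.add (hA.add hlin)).congr_of_mem hsplit hr |>.congr_deriv (by ring)

theorem eq_zero_of_deriv_le_mul_of_eq_zero_left {E E' : ℝ → ℝ} {K a b : ℝ}
    (hc : ContinuousOn E (Icc a b)) (hd : ∀ x ∈ Ioo a b, HasDerivAt E (E' x) x)
    (hb : ∀ x ∈ Ioo a b, E' x ≤ K * E x) (h0 : ∀ x ∈ Icc a b, 0 ≤ E x) (ha : E a = 0) :
    ∀ x ∈ Icc a b, E x = 0 := by
  have hanti : AntitoneOn (fun x => E x * Real.exp (-K * x)) (Icc a b) := by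
    refine antitoneOn_of_hasDerivWithinAt_nonpos (convex_Icc a b) (hc.mul (by fun_prop))
      (f' := fun x => (E' x - K * E x) * Real.exp (-K * x)) (fun x hx => ?_) fun x hx => ?_
    · rw [interior_Icc] at hx ⊢
      refine ((hd x hx).mul ((hasDerivAt_id x).const_mul (-K)).exp).hasDerivWithinAt
        |>.congr_deriv ?_
      simp only [id]
      ring
    · rw [interior_Icc] at hx
      exact mul_nonpos_of_nonpos_of_nonneg (by linarith [hb x hx]) (Real.exp_pos _).le
  intro x hx
  have h := hanti ⟨le_rfl, hx.1.trans hx.2⟩ hx hx.1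
  simp only [ha, zero_mul] at h
  exact le_antisymm (nonpos_of_mul_nonpos_left h (Real.exp_pos _)) (h0 x hx)

theorem eq_zero_of_abs_deriv_le_mul {E E' : ℝ → ℝ} {K a b c : ℝ}
    (hc : ContinuousOn E (Icc a b)) (hd : ∀ x ∈ Ioo a b, HasDerivAt E (E' x) x)
    (hb : ∀ x ∈ Ioo a b, |E' x| ≤ K * E x) (h0 : ∀ x ∈ Icc a b, 0 ≤ E x)
    (hcab : c ∈ Icc a b) (hEc : E c = 0) : ∀ x ∈ Icc a b, E x = 0 := by
  intro x hx
  rcases le_total c x with hcx | hxc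
  · have hsub : Icc c b ⊆ Icc a b := Icc_subset_Icc_left hcab.1
    have hsub' : Ioo c b ⊆ Ioo a b := Ioo_subset_Ioo_left hcab.1
    exact eq_zero_of_deriv_le_mul_of_eq_zero_left (hc.mono hsub) (fun y hy => hd y (hsub' hy))
      (fun y hy => (le_abs_self _).trans (hb y (hsub' hy))) (fun y hy => h0 y (hsub hy)) hEc
      x ⟨hcx, hx.2⟩
  · have hmem : ∀ y, y ∈ Icc (-c) (-a) → -y ∈ Icc a b := fun y hy =>
      ⟨le_neg.2 hy.2, (neg_le.1 hy.1).trans hcab.2⟩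
    have hmem' : ∀ y, y ∈ Ioo (-c) (-a) → -y ∈ Ioo a b := fun y hy =>
      ⟨lt_neg.2 hy.2, (neg_lt.1 hy.1).trans_le hcab.2⟩
    have := eq_zero_of_deriv_le_mul_of_eq_zero_left (E := fun y => E (-y)) (E' := fun y => -E' (-y))
      (K := K) (hc.comp continuousOn_neg hmem)
      (fun y hy => ((hd (-y) (hmem' y hy)).comp y (hasDerivAt_neg y)).congr_deriv (by ring))
      (fun y hy => (neg_le_abs _).trans (hb (-y) (hmem' y hy))) (fun y hy => h0 (-y) (hmem y hy))
      (by simpa using hEc) (-x) ⟨neg_le_neg hxc, neg_le_neg hx.1⟩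
    simpa using this

theorem CondA1.coe_abs_lt {R : ℝ} {α : EReal} {f : ℝ → ℝ → ℝ} (h : CondA1 R α f) {x : ℝ}
    (hx : |x| ≤ R) : ((|x| : ℝ) : EReal) < α :=
  (EReal.coe_le_coe_iff.2 hx).trans_lt h.1

theorem CondA1.continuousOn_Icc_prod {R δ : ℝ} {α : EReal} {f : ℝ → ℝ → ℝ} (h : CondA1 R α f)
    (hδ : 0 ≤ δ) : ContinuousOn (fun p : ℝ × ℝ => f p.1 p.2) (Icc δ R ×ˢ Icc (-R) R) :=
  h.2.1.mono fun _ hp => ⟨Icc_subset_Icc_left hδ hp.1, h.coe_abs_lt (abs_le.2 hp.2)⟩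

theorem CondA1.integral_nonneg {R : ℝ} {α : EReal} {f : ℝ → ℝ → ℝ} (h : CondA1 R α f) {r s : ℝ}
    (hr : r ∈ Icc 0 R) (hs : |s| ≤ R) : 0 ≤ ∫ x in (0 : ℝ)..s, f r x := by
  refine integral_nonneg_of_mul_self_nonneg fun x hx => ?_
  rcases eq_or_ne x 0 with rfl | hx0
  · simp
  have hxs : |x| ≤ |s| := by simpa using abs_sub_left_of_mem_uIcc hx
  exact (h.2.2 r hr x (h.coe_abs_lt (hxs.trans hs)) hx0).le

theorem mapsTo_Icc_neg_of_abs_deriv_le_one {u u' : ℝ → ℝ} {δ R r₀ : ℝ} (hδ : 0 ≤ δ)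
    (hu : ∀ r ∈ Icc δ R, HasDerivWithinAt u (u' r) (Icc δ R) r)
    (hu' : ∀ r ∈ Icc δ R, |u' r| ≤ 1) (hr₀ : r₀ ∈ Icc δ R) (hur₀ : u r₀ = 0) :
    MapsTo u (Icc δ R) (Icc (-R) R) := fun t ht => by
  have h := (convex_Icc δ R).norm_image_sub_le_of_norm_hasDerivWithin_le hu hu' hr₀ ht
  rw [hur₀, sub_zero, one_mul] at h
  have htr : |t - r₀| ≤ R :=
    abs_sub_le_iff.2 ⟨by linarith [ht.2, hr₀.1], by linarith [ht.1, hr₀.2]⟩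
  exact abs_le.1 ((Real.norm_eq_abs _ ▸ h).trans (Real.norm_eq_abs _ ▸ htr))

noncomputable def energy (lam : ℝ) (f : ℝ → ℝ → ℝ) (u u' : ℝ → ℝ) (t : ℝ) : ℝ :=
  lam * (∫ x in (0 : ℝ)..u t, f t x) + phiStar (phi1 (u' t))

theorem energy_nonneg {lam t : ℝ} {f : ℝ → ℝ → ℝ} {u u' : ℝ → ℝ} (hlam : 0 ≤ lam)
    (hF : 0 ≤ ∫ x in (0 : ℝ)..u t, f t x) : 0 ≤ energy lam f u u' t :=
  add_nonneg (mul_nonneg hlam hF) (phiStar_nonneg _)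

theorem eq_zero_of_energy_eq_zero {lam t : ℝ} {f : ℝ → ℝ → ℝ} {u u' : ℝ → ℝ} (hlam : 0 ≤ lam)
    (hF : 0 ≤ ∫ x in (0 : ℝ)..u t, f t x) (hu' : |u' t| < 1) (hE : energy lam f u u' t = 0) :
    u' t = 0 := by
  have h := phiStar_nonneg (phi1 (u' t))
  have hΦ : phiStar (phi1 (u' t)) = 0 := by
    rw [energy] at hE
    nlinarith [mul_nonneg hlam hF]
  exact (phi1_eq_zero_iff hu').1 (phiStar_eq_zero_iff.1 hΦ)

theorem hasDerivWithinAt_energy {n : ℕ} {s K : Set ℝ} {lam r Fr w : ℝ} {f : ℝ → ℝ → ℝ}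
    {u u' : ℝ → ℝ} (hf : ContinuousOn (fun p : ℝ × ℝ => f p.1 p.2) (s ×ˢ K))
    (hK : K.OrdConnected) (hK0 : (0 : ℝ) ∈ K) (huK : MapsTo u s K) (hr : r ∈ s) (hr0 : r ≠ 0)
    (hFr : HasDerivWithinAt (fun t => ∫ x in (0 : ℝ)..u r, f t x) Fr s r)
    (hu : HasDerivWithinAt u (u' r) s r) (hu' : |u' r| < 1)
    (hw : HasDerivWithinAt (fun t => t ^ n * phi1 (u' t)) w s r) :
    HasDerivWithinAt (energy lam f u u')
      (lam * (Fr + f r (u r) * u' r) + u' r * (w / r ^ n - n / r * phi1 (u' r))) s r := by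
  have hΦ := (hasDerivAt_phiStar (phi1 (u' r))).comp_hasDerivWithinAt r (hw.of_pow_mul n hr0)
  rw [phi1inv_phi1 hu'] at hΦ
  exact ((hasDerivWithinAt_integral_apply_comp hf hK hK0 huK hr hFr hu).const_mul lam).add hΦ

theorem abs_energy_deriv_le {lam F Fr ω Ω c s : ℝ} (hlam : 0 ≤ lam) (hF : 0 ≤ F)
    (hFr : |Fr| ≤ ω * F) (hω : 0 ≤ ω) (hωΩ : ω ≤ Ω) (hc : 0 ≤ c) (hs : |s| < 1) :
    |lam * Fr - c * (s * phi1 s)| ≤ (Ω + 2 * c) * (lam * F + phiStar (phi1 s)) := by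
  have h0 := phi1inv_mul_self_nonneg (phi1 s)
  have h2 := phi1inv_mul_self_le (phi1 s)
  rw [phi1inv_phi1 hs] at h0 h2
  have hlF : |lam * Fr| ≤ Ω * (lam * F) := by
    rw [abs_mul, abs_of_nonneg hlam]
    nlinarith [mul_le_mul_of_nonneg_right hωΩ hF]
  calc |lam * Fr - c * (s * phi1 s)| ≤ |lam * Fr| + c * (s * phi1 s) := by
        simpa [abs_of_nonneg (mul_nonneg hc h0)] using abs_sub (lam * Fr) (c * (s * phi1 s))
    _ ≤ (Ω + 2 * c) * (lam * F + phiStar (phi1 s)) := by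
        nlinarith [mul_le_mul_of_nonneg_left h2 hc, hω.trans hωΩ, mul_nonneg hlam hF]

theorem energy_eq_zero_of_first_order_zero {n : ℕ} {δ R lam r₀ Ω : ℝ} {K : Set ℝ} {f : ℝ → ℝ → ℝ}
    {u u' w' Fr ω : ℝ → ℝ} (hδ : 0 ≤ δ) (hlam : 0 ≤ lam)
    (hf : ContinuousOn (fun p : ℝ × ℝ => f p.1 p.2) (Icc δ R ×ˢ K)) (hK : K.OrdConnected)
    (hK0 : (0 : ℝ) ∈ K) (huK : MapsTo u (Icc δ R) K)
    (hF : ∀ t ∈ Icc δ R, 0 ≤ ∫ x in (0 : ℝ)..u t, f t x)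
    (hFr : ∀ t ∈ Icc δ R,
      HasDerivWithinAt (fun τ => ∫ x in (0 : ℝ)..u t, f τ x) (Fr t) (Icc δ R) t)
    (hFrω : ∀ t ∈ Icc δ R, |Fr t| ≤ ω t * ∫ x in (0 : ℝ)..u t, f t x)
    (hω : ∀ t ∈ Icc δ R, 0 ≤ ω t) (hωΩ : ∀ t ∈ Icc δ R, ω t ≤ Ω)
    (hu : ∀ t ∈ Icc δ R, HasDerivWithinAt u (u' t) (Icc δ R) t)
    (hu' : ∀ t ∈ Icc δ R, |u' t| < 1)
    (hw : ∀ t ∈ Icc δ R,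
      HasDerivWithinAt (fun τ => τ ^ n * phi1 (u' τ)) (w' t) (Icc δ R) t)
    (heq : ∀ t ∈ Ioo δ R, w' t + lam * t ^ n * f t (u t) = 0)
    (hr₀ : r₀ ∈ Ioc δ R) (hur₀ : u r₀ = 0) (hu'r₀ : u' r₀ = 0) :
    ∀ t ∈ Ioc δ R, energy lam f u u' t = 0 := by
  intro t ht
  set a := min t r₀
  have ha : δ < a := lt_min ht.1 hr₀.1
  have ha0 : 0 < a := hδ.trans_lt ha
  have hsub : Icc a R ⊆ Icc δ R := Icc_subset_Icc_left ha.le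
  have hE : ∀ x ∈ Icc a R, HasDerivWithinAt (energy lam f u u')
      (lam * (Fr x + f x (u x) * u' x) + u' x * (w' x / x ^ n - n / x * phi1 (u' x)))
      (Icc δ R) x := fun x hx =>
    hasDerivWithinAt_energy hf hK hK0 huK (hsub hx) (ha0.trans_le hx.1).ne' (hFr x (hsub hx))
      (hu x (hsub hx)) (hu' x (hsub hx)) (hw x (hsub hx))
  refine eq_zero_of_abs_deriv_le_mul (K := Ω + 2 * (n / a))
    (E' := fun x => lam * Fr x - n / x * (u' x * phi1 (u' x)))
    (fun x hx => (hE x hx).continuousWithinAt.mono hsub) (fun x hx => ?_) (fun x hx => ?_)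
    (fun x hx => energy_nonneg hlam (hF x (hsub hx))) ⟨min_le_right _ _, hr₀.2⟩ ?_ t
    ⟨min_le_left _ _, ht.2⟩
  · have hxI : x ∈ Ioo δ R := ⟨ha.trans hx.1, hx.2⟩
    have hx0 : x ^ n ≠ 0 := pow_ne_zero n (ha0.trans hx.1).ne'
    refine ((hE x (Ioo_subset_Icc_self hx)).hasDerivAt (Icc_mem_nhds hxI.1 hxI.2)).congr_deriv ?_
    rw [eq_neg_of_add_eq_zero_left (heq x hxI)]
    field_simp
    ring
  · have hxI := hsub (Ioo_subset_Icc_self hx)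
    refine (abs_energy_deriv_le hlam (hF x hxI) (hFrω x hxI) (hω x hxI) (hωΩ x hxI)
      (div_nonneg n.cast_nonneg (ha0.trans hx.1).le) (hu' x hxI)).trans ?_
    refine mul_le_mul_of_nonneg_right ?_ (energy_nonneg hlam (hF x hxI))
    gcongr
    exact hx.1.le
  · simp [energy, hur₀, hu'r₀, phi1, phiStar]

theorem stmt8_general (N : ℕ) (δ R lam : ℝ) (hδ : 0 ≤ δ) (hδR : δ < R) (hlam : 0 ≤ lam)
    (α : EReal) (f : ℝ → ℝ → ℝ) (hA1 : CondA1 R α f) (hA4 : CondA4 δ R α f)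
    (u u' : ℝ → ℝ)
    (hu : ∀ r ∈ Icc δ R, HasDerivWithinAt u (u' r) (Icc δ R) r)
    (hu'c : ContinuousOn u' (Icc δ R))
    (hu'lt : ∀ r ∈ Icc δ R, |u' r| < 1)
    (w' : ℝ → ℝ)
    (hw : ∀ r ∈ Icc δ R,
      HasDerivWithinAt (fun t => t ^ (N - 1) * phi1 (u' t)) (w' r) (Icc δ R) r)
    (heq : ∀ r ∈ Ioo δ R, w' r + lam * r ^ (N - 1) * f r (u r) = 0)
    (r₀ : ℝ) (hr₀ : r₀ ∈ Ioc δ R) (hur₀ : u r₀ = 0) (hu'r₀ : u' r₀ = 0) :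
    ∀ r ∈ Icc δ R, u r = 0 := by
  obtain ⟨Fr, ω, hωc, hω, hF⟩ := hA4
  obtain ⟨Ω, hΩ⟩ := isCompact_Icc.bddAbove_image hωc
  have huK : MapsTo u (Icc δ R) (Icc (-R) R) := mapsTo_Icc_neg_of_abs_deriv_le_one hδ hu
    (fun r hr => (hu'lt r hr).le) (Ioc_subset_Icc_self hr₀) hur₀
  have hα : ∀ t ∈ Icc δ R, ((|u t| : ℝ) : EReal) < α :=
    fun t ht => hA1.coe_abs_lt (abs_le.2 (huK ht))
  have hFnn : ∀ t ∈ Icc δ R, 0 ≤ ∫ x in (0 : ℝ)..u t, f t x :=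
    fun t ht => hA1.integral_nonneg (Icc_subset_Icc_left hδ ht) (abs_le.2 (huK ht))
  have hE := energy_eq_zero_of_first_order_zero hδ hlam (hA1.continuousOn_Icc_prod hδ)
    ordConnected_Icc ⟨by linarith, by linarith⟩ huK hFnn (fun t ht => (hF _ (hα t ht)).1 t ht)
    (fun t ht => (hF _ (hα t ht)).2 t ht) hω (fun t ht => hΩ (mem_image_of_mem ω ht))
    hu hu'lt hw heq hr₀ hur₀ hu'r₀
  have hu'0 : EqOn u' 0 (Icc δ R) :=
    EqOn.of_subset_closure (fun t ht => eq_zero_of_energy_eq_zero hlam (hFnn t ⟨ht.1.le, ht.2⟩)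
        (hu'lt t ⟨ht.1.le, ht.2⟩) (hE t ht))
      hu'c continuousOn_const Ioc_subset_Icc_self (closure_Ioc hδR.ne).ge
  intro r hr
  simpa [hur₀] using (convex_Icc δ R).norm_image_sub_le_of_norm_hasDerivWithin_le hu
    (C := 0) (fun t ht => by simp [hu'0 ht]) (Ioc_subset_Icc_self hr₀) hr

/-- Lemma 2.5. Under (A1) and (A4), a solution of
`(r^{N-1} φ₁(u'))' + λ r^{N-1} f(r,u) = 0` on `(δ,R)` vanishing to first order
at some `r₀ ∈ (δ,R]` is identically zero on `[δ,R]`. -/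
theorem stmt8 (N : ℕ) (hN : 2 ≤ N) (δ R lam : ℝ) (hδ : 0 ≤ δ) (hδR : δ < R) (hlam : 0 ≤ lam)
    (α : EReal) (f : ℝ → ℝ → ℝ) (hA1 : CondA1 R α f) (hA4 : CondA4 δ R α f)
    (u u' : ℝ → ℝ)
    (hu : ∀ r ∈ Icc δ R, HasDerivWithinAt u (u' r) (Icc δ R) r)
    (hu'c : ContinuousOn u' (Icc δ R))
    (hu'lt : ∀ r ∈ Icc δ R, |u' r| < 1)
    (w' : ℝ → ℝ) (hw'c : ContinuousOn w' (Icc δ R))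
    (hw : ∀ r ∈ Icc δ R,
      HasDerivWithinAt (fun t => t ^ (N - 1) * phi1 (u' t)) (w' r) (Icc δ R) r)
    (heq : ∀ r ∈ Ioo δ R, w' r + lam * r ^ (N - 1) * f r (u r) = 0)
    (r₀ : ℝ) (hr₀ : r₀ ∈ Ioc δ R) (hur₀ : u r₀ = 0) (hu'r₀ : u' r₀ = 0) :
    ∀ r ∈ Icc δ R, u r = 0 :=
  stmt8_general N δ R lam hδ hδR hlam α f hA1 hA4 u u' hu hu'c hu'lt w' hw heq r₀ hr₀ hur₀ hu'r₀
end

section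
/- Let N ≥ 2 be an integer, 0 < δ < R, and let f satisfy (A1). Let u ∈ C¹([δ,R]) with |u'(r)| < 1 for all r be such that r ↦ r^{N−1}φ₁(u'(r)) is continuously differentiable, (r^{N−1}φ₁(u'))' + r^{N−1} f(r,u) = 0 on (δ,R), and u'(δ) = 0. Suppose τ₁ ∈ (δ,R] is such that u(τ₁) = 0, u is not identically zero on [δ,τ₁], and u(r) ≥ 0 for all r ∈ [δ,τ₁]. Then u(δ) > 0, u'(r) < 0 for all r ∈ (δ,τ₁], and u(r) > 0 for all r ∈ [δ,τ₁); in particular u is strictly decreasing on [δ,τ₁]. -/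
open Set Filter Topology

private lemma phi1_zero : phi1 0 = 0 := by simp [phi1]

private lemma phi1_lt_zero_iff {s : ℝ} (h : |s| < 1) : phi1 s < 0 ↔ s < 0 := by
  have h1 : 0 < 1 - s ^ 2 := by nlinarith [abs_lt.mp h]
  have h2 : 0 < Real.sqrt (1 - s ^ 2) := Real.sqrt_pos.mpr h1
  unfold phi1
  rw [div_lt_iff₀ h2, zero_mul]

private lemma phi1_nonpos_iff {s : ℝ} (h : |s| < 1) : phi1 s ≤ 0 ↔ s ≤ 0 := by
  have h1 : 0 < 1 - s ^ 2 := by nlinarith [abs_lt.mp h]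
  have h2 : 0 < Real.sqrt (1 - s ^ 2) := Real.sqrt_pos.mpr h1
  unfold phi1
  rw [div_le_iff₀ h2, zero_mul]

/-- Lemma 3.1. Under (A1), a solution of
`(r^{N-1} φ₁(u'))' + r^{N-1} f(r,u) = 0` with `u'(δ) = 0` which is nonnegative
and not identically zero on `[δ,τ₁]` and vanishes at `τ₁` satisfies `u(δ) > 0`,
`u' < 0` on `(δ,τ₁]`, `u > 0` on `[δ,τ₁)`; in particular `u` is strictly
decreasing on `[δ,τ₁]`. -/
theorem stmt9 (N : ℕ) (hN : 2 ≤ N) (δ R : ℝ) (hδ : 0 < δ) (hδR : δ < R)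
    (α : EReal) (f : ℝ → ℝ → ℝ) (hA1 : CondA1 R α f)
    (u u' : ℝ → ℝ)
    (hu : ∀ r ∈ Icc δ R, HasDerivWithinAt u (u' r) (Icc δ R) r)
    (hu'c : ContinuousOn u' (Icc δ R))
    (hu'lt : ∀ r ∈ Icc δ R, |u' r| < 1)
    (w' : ℝ → ℝ) (hw'c : ContinuousOn w' (Icc δ R))
    (hw : ∀ r ∈ Icc δ R,
      HasDerivWithinAt (fun t => t ^ (N - 1) * phi1 (u' t)) (w' r) (Icc δ R) r)
    (heq : ∀ r ∈ Ioo δ R, w' r + r ^ (N - 1) * f r (u r) = 0)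
    (hu'δ : u' δ = 0)
    (τ₁ : ℝ) (hτ₁ : τ₁ ∈ Ioc δ R) (huτ₁ : u τ₁ = 0)
    (hnontriv : ∃ r ∈ Icc δ τ₁, u r ≠ 0)
    (hnonneg : ∀ r ∈ Icc δ τ₁, 0 ≤ u r) :
    0 < u δ ∧ (∀ r ∈ Ioc δ τ₁, u' r < 0) ∧ (∀ r ∈ Ico δ τ₁, 0 < u r) ∧
      StrictAntiOn u (Icc δ τ₁) := by
  obtain ⟨hτδ, hτR⟩ := hτ₁
  have hIccsub : Icc δ τ₁ ⊆ Icc δ R := Icc_subset_Icc le_rfl hτR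
  have hR0 : (0:ℝ) < R := hδ.trans hδR
  have hRα : ((R : ℝ) : EReal) < α := hA1.1
  set w : ℝ → ℝ := fun t => t ^ (N - 1) * phi1 (u' t) with hwdef
  -- bound on |u|
  have hbound : ∀ r ∈ Icc δ R, ((|u r| : ℝ) : EReal) < α := by
    intro r hr
    have hτ : τ₁ ∈ Icc δ R := ⟨hτδ.le, hτR⟩
    have := Convex.norm_image_sub_le_of_norm_hasDerivWithin_le hu
      (fun x hx => (hu'lt x hx).le) (convex_Icc δ R) hτ hr
    rw [huτ₁, sub_zero, one_mul] at this
    have habs : |u r| ≤ R - δ := by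
      have : |u r| ≤ |r - τ₁| := this
      have h2 : |r - τ₁| ≤ R - δ := by
        rw [abs_sub_le_iff]; constructor <;> [linarith [hr.1, hr.2, hτ.1, hτ.2];
          linarith [hr.1, hr.2, hτ.1, hτ.2]]
      linarith
    calc ((|u r| : ℝ) : EReal) < ((R : ℝ) : EReal) := by
          exact_mod_cast lt_of_le_of_lt habs (by linarith)
      _ < α := hRα
  -- f t 0 ≥ 0
  have hf0 : ∀ t ∈ Icc (0:ℝ) R, 0 ≤ f t 0 := by
    intro t ht
    have hmem : ((t, (0:ℝ)) : ℝ × ℝ) ∈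
        {p : ℝ × ℝ | p.1 ∈ Icc 0 R ∧ ((|p.2| : ℝ) : EReal) < α} := by
      refine ⟨ht, ?_⟩
      simpa using lt_trans (by exact_mod_cast hR0 : ((0:ℝ):EReal) < (R:EReal)) hRα
    have hcw := hA1.2.1 _ hmem
    have hIoo : Ioo (0:ℝ) R ∈ 𝓝[>] (0:ℝ) := Ioo_mem_nhdsGT_of_mem ⟨le_rfl, hR0⟩
    have hmap : Tendsto (fun s : ℝ => ((t, s) : ℝ × ℝ)) (𝓝[>] (0:ℝ))
        (𝓝[{p : ℝ × ℝ | p.1 ∈ Icc 0 R ∧ ((|p.2| : ℝ) : EReal) < α}] (t, 0)) := by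
      rw [tendsto_nhdsWithin_iff]
      constructor
      · exact ((continuous_const.prodMk continuous_id).tendsto 0).mono_left
          nhdsWithin_le_nhds
      · filter_upwards [hIoo] with s hs
        refine ⟨ht, ?_⟩
        have : |s| < R := by rw [abs_of_pos hs.1]; exact hs.2
        exact lt_trans (by exact_mod_cast this) hRα
    have htt : Tendsto (fun s : ℝ => f t s) (𝓝[>] (0:ℝ)) (𝓝 (f t 0)) :=
      hcw.tendsto.comp hmap
    refine ge_of_tendsto htt ?_
    filter_upwards [hIoo] with s hs
    have hsα : ((|s| : ℝ) : EReal) < α := by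
      have : |s| < R := by rw [abs_of_pos hs.1]; exact hs.2
      exact lt_trans (by exact_mod_cast this) hRα
    have := hA1.2.2 t ht s hsα (ne_of_gt hs.1)
    nlinarith [hs.1]
  -- f t (u t) > 0 when u t > 0, and ≥ 0 always on [δ,τ₁]
  have hfpos : ∀ t ∈ Icc δ τ₁, 0 < u t → 0 < f t (u t) := by
    intro t ht hut
    have ht' : t ∈ Icc (0:ℝ) R := ⟨le_trans hδ.le (ht.1), (hIccsub ht).2⟩
    have := hA1.2.2 t ht' (u t) (hbound t (hIccsub ht)) (ne_of_gt hut)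
    nlinarith
  have hfnn : ∀ t ∈ Icc δ τ₁, 0 ≤ f t (u t) := by
    intro t ht
    rcases lt_or_eq_of_le (hnonneg t ht) with h | h
    · exact (hfpos t ht h).le
    · rw [← h]; exact hf0 t ⟨le_trans hδ.le ht.1, (hIccsub ht).2⟩
  -- derivatives at interior points
  have hudAt : ∀ x ∈ Ioo δ R, HasDerivAt u (u' x) x := fun x hx =>
    (hu x (Ioo_subset_Icc_self hx)).hasDerivAt (Icc_mem_nhds hx.1 hx.2)
  have hwdAt : ∀ x ∈ Ioo δ R, HasDerivAt w (w' x) x := fun x hx =>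
    (hw x (Ioo_subset_Icc_self hx)).hasDerivAt (Icc_mem_nhds hx.1 hx.2)
  have hwcont : ContinuousOn w (Icc δ R) := fun x hx =>
    (hw x hx).continuousWithinAt
  have hucont : ContinuousOn u (Icc δ R) := fun x hx =>
    (hu x hx).continuousWithinAt
  have hwδ : w δ = 0 := by simp [hwdef, hu'δ, phi1_zero]
  have hIooIoo : Ioo δ τ₁ ⊆ Ioo δ R := Ioo_subset_Ioo le_rfl hτR
  -- w antitone on [δ,τ₁]
  have hw'np : ∀ x ∈ Ioo δ τ₁, w' x ≤ 0 := by
    intro x hx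
    have hx' := hIooIoo hx
    have := heq x hx'
    have hxpos : (0:ℝ) < x := hδ.trans hx.1
    have hpow : (0:ℝ) < x ^ (N - 1) := pow_pos hxpos _
    nlinarith [hfnn x (Ioo_subset_Icc_self hx), mul_nonneg hpow.le
      (hfnn x (Ioo_subset_Icc_self hx))]
  have hwanti : AntitoneOn w (Icc δ τ₁) := by
    apply antitoneOn_of_deriv_nonpos (convex_Icc δ τ₁) (hwcont.mono hIccsub)
    · intro x hx
      rw [interior_Icc] at hx
      exact (hwdAt x (hIooIoo hx)).differentiableAt.differentiableWithinAt
    · intro x hx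
      rw [interior_Icc] at hx
      rw [(hwdAt x (hIooIoo hx)).deriv]
      exact hw'np x hx
  -- u' ≤ 0 on (δ,τ₁)
  have hu'np : ∀ x ∈ Ioo δ τ₁, u' x ≤ 0 := by
    intro x hx
    have hwx : w x ≤ 0 := by
      have := hwanti (left_mem_Icc.mpr hτδ.le) (Ioo_subset_Icc_self hx) hx.1.le
      rw [hwδ] at this; exact this
    have hxpos : (0:ℝ) < x := hδ.trans hx.1
    have hpow : (0:ℝ) < x ^ (N - 1) := pow_pos hxpos _
    have hwx' : x ^ (N - 1) * phi1 (u' x) ≤ 0 := hwx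
    have hphinp : phi1 (u' x) ≤ 0 := by
      by_contra hcon
      push_neg at hcon
      nlinarith [hwx']
    exact (phi1_nonpos_iff (hu'lt x (hIccsub (Ioo_subset_Icc_self hx)))).mp hphinp
  have huanti : AntitoneOn u (Icc δ τ₁) := by
    apply antitoneOn_of_deriv_nonpos (convex_Icc δ τ₁) (hucont.mono hIccsub)
    · intro x hx
      rw [interior_Icc] at hx
      exact (hudAt x (hIooIoo hx)).differentiableAt.differentiableWithinAt
    · intro x hx
      rw [interior_Icc] at hx
      rw [(hudAt x (hIooIoo hx)).deriv]
      exact hu'np x hx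
  -- u δ > 0
  have huδ : 0 < u δ := by
    obtain ⟨r₀, hr₀, hne⟩ := hnontriv
    have : 0 < u r₀ := lt_of_le_of_ne (hnonneg r₀ hr₀) (Ne.symm hne)
    exact lt_of_lt_of_le this (huanti (left_mem_Icc.mpr hτδ.le) hr₀ hr₀.1)
  -- u' < 0 on (δ,τ₁]
  have hu'neg : ∀ r ∈ Ioc δ τ₁, u' r < 0 := by
    intro r hr
    -- find c ∈ (δ, r) with u c > 0
    obtain ⟨c, hcu, hc⟩ : ∃ c, 0 < u c ∧ c ∈ Ioo δ r := by
      have hne : (𝓝[Ioo δ r] δ).NeBot := by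
        rw [← mem_closure_iff_nhdsWithin_neBot, closure_Ioo (ne_of_lt hr.1)]
        exact ⟨le_rfl, hr.1.le⟩
      have hle : 𝓝[Ioo δ r] δ ≤ 𝓝[Icc δ R] δ :=
        nhdsWithin_mono δ (fun x hx => hIccsub ⟨hx.1.le, le_trans hx.2.le hr.2⟩)
      have hev : ∀ᶠ x in 𝓝[Icc δ R] δ, 0 < u x :=
        (hucont δ (left_mem_Icc.mpr hδR.le)).eventually
          (eventually_gt_nhds huδ) |>.mono (fun x hx => hx)
      exact ((hev.filter_mono hle).and self_mem_nhdsWithin).exists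
    -- w strictly decreasing on [δ,c]
    have hcτ : c < τ₁ := lt_of_lt_of_le hc.2 hr.2
    have hwsc : StrictAntiOn w (Icc δ c) := by
      apply strictAntiOn_of_deriv_neg (convex_Icc δ c)
        (hwcont.mono (Icc_subset_Icc le_rfl (le_trans hcτ.le hτR)))
      intro x hx
      rw [interior_Icc] at hx
      have hx1 : x ∈ Ioo δ τ₁ := ⟨hx.1, lt_trans hx.2 hcτ⟩
      rw [(hwdAt x (hIooIoo hx1)).deriv]
      have hux : 0 < u x := lt_of_lt_of_le hcu
        (huanti (Ioo_subset_Icc_self hx1) ⟨hc.1.le, hcτ.le⟩ hx.2.le)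
      have hf := hfpos x (Ioo_subset_Icc_self hx1) hux
      have := heq x (hIooIoo hx1)
      have hxpos : (0:ℝ) < x := hδ.trans hx.1
      have hpow : (0:ℝ) < x ^ (N - 1) := pow_pos hxpos _
      nlinarith
    have hwc : w c < 0 := by
      have := hwsc (left_mem_Icc.mpr hc.1.le) (right_mem_Icc.mpr hc.1.le) hc.1
      rw [hwδ] at this; exact this
    have hwr : w r < 0 := lt_of_le_of_lt
      (hwanti ⟨hc.1.le, hcτ.le⟩ ⟨hr.1.le, hr.2⟩ hc.2.le) hwc
    have hrpos : (0:ℝ) < r := hδ.trans hr.1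
    have hpow : (0:ℝ) < r ^ (N - 1) := pow_pos hrpos _
    have hwr' : r ^ (N - 1) * phi1 (u' r) < 0 := hwr
    have hphi : phi1 (u' r) < 0 := by
      by_contra hcon
      push_neg at hcon
      nlinarith [hwr']
    exact (phi1_lt_zero_iff (hu'lt r (hIccsub ⟨hr.1.le, hr.2⟩))).mp hphi
  have hsa : StrictAntiOn u (Icc δ τ₁) := by
    apply strictAntiOn_of_deriv_neg (convex_Icc δ τ₁) (hucont.mono hIccsub)
    intro x hx
    rw [interior_Icc] at hx
    rw [(hudAt x (hIooIoo hx)).deriv]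
    exact hu'neg x ⟨hx.1, hx.2.le⟩
  refine ⟨huδ, hu'neg, ?_, hsa⟩
  intro r hr
  have := hsa ⟨hr.1, hr.2.le⟩ (right_mem_Icc.mpr hτδ.le) hr.2
  rw [huτ₁] at this
  exact this
end

section
/- Let N ≥ 2 be an integer, R > 0, and let f satisfy (A1) and (A3) with δ = 0. Fix k ∈ ℕ and λ̂ > 0. For n ∈ ℕ define g_n : [0,R] × (−α,α) → ℝ by g_n(r,s) = 0 for r ∈ [0, 1/n] and g_n(r,s) = f(r − 1/n, s) for r ∈ (1/n, R]. Then there exists b̂ > 0, independent of n, such that every function u ∈ C¹([0,R]), with r ↦ r^{N−1}u'(r) continuously differentiable, satisfying −(r^{N−1}u')' + (N−1) r^{N−2}(u')³ = λ̂ r^{N−1} g_n(r,u) h(u') on (0,R), u'(0) = u(R) = 0, and belonging to S_{k,0}, satisfies sup_{r∈[0,R]} |u(r)| ≥ b̂. -/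
open Set Filter Topology

/-!
Suppose `|u| < b̂` on `[0, R]`. Since `h(y) = (1 - y²)^{3/2} = 1 / φ₁'(y)`, wherever `|u'| < 1` the
equation reads `(r^{N-1} φ₁(u'))' = -λ r^{N-1} g_n(r, u)`. Continuity of `f` and `f(r, 0) = 0` make
`g_n(r, u)` uniformly small, and integrating from `r = 0` keeps `|u'| < 1/2` on all of `[0, R]`.

If `1/n ≥ R` then `g_n(r, u) ≡ 0` and hence `u ≡ 0`. Otherwise `1/n` lies below a fixed
`p ∈ [R/2, R)`, and one of `k` disjoint subintervals of `(p, R)` of length `ℓ = (R - p)/(2k)` avoids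
the `k - 1` zeros of `u`. There `y = r^{N-1} φ₁(u')` satisfies `u' = θ y` with `θ ≥ 1/(2 R^{N-1})`
and, by (A3), `u y' ≤ -C u²` with `C` as large as we like. For `κ C ℓ² > 16` such a pair cannot
keep a sign (a crude Sturm comparison with `u'' + κ C u = 0`), so `u` vanishes there after all.
-/

lemma hcap_eq_sqrt_pow {s : ℝ} (hs : |s| ≤ 1) : hcap s = √(1 - s ^ 2) ^ 3 := by
  have h0 : 0 ≤ 1 - s ^ 2 := by nlinarith [sq_abs s, abs_nonneg s]
  rw [hcap, if_pos hs, Real.sqrt_eq_rpow, ← Real.rpow_natCast ((1 - s ^ 2) ^ (1 / 2 : ℝ)) 3,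
    ← Real.rpow_mul h0]
  norm_num

lemma sqrt_one_sub_sq_pos {s : ℝ} (hs : |s| < 1) : 0 < √(1 - s ^ 2) :=
  Real.sqrt_pos.2 (by nlinarith [sq_abs s, abs_nonneg s])

lemma sq_sqrt_one_sub_sq {s : ℝ} (hs : |s| < 1) : √(1 - s ^ 2) ^ 2 = 1 - s ^ 2 :=
  Real.sq_sqrt (by nlinarith [sq_abs s, abs_nonneg s])

lemma hasDerivAt_phi1 {s : ℝ} (hs : |s| < 1) : HasDerivAt phi1 (hcap s)⁻¹ s := by
  have hT := sqrt_one_sub_sq_pos hs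
  have hsq := (Real.hasDerivAt_sqrt (by nlinarith [sq_sqrt_one_sub_sq hs] : 1 - s ^ 2 ≠ 0)).comp s
    ((hasDerivAt_pow 2 s).const_sub 1)
  refine ((hasDerivAt_id s).div hsq hT.ne').congr_deriv ?_
  simp only [Function.comp_apply, id_eq]
  rw [hcap_eq_sqrt_pow hs.le]
  field_simp
  linear_combination 2 * sq_sqrt_one_sub_sq hs

lemma ContinuousOn.phi1 {v : ℝ → ℝ} {s : Set ℝ} (hv : ContinuousOn v s)
    (h : ∀ x ∈ s, |v x| < 1) : ContinuousOn (fun x => phi1 (v x)) s :=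
  fun x hx => (hasDerivAt_phi1 (h x hx)).continuousAt.comp_continuousWithinAt (hv x hx)

lemma sqrt_mul_phi1 {s : ℝ} (hs : |s| < 1) : √(1 - s ^ 2) * phi1 s = s :=
  mul_div_cancel₀ s (sqrt_one_sub_sq_pos hs).ne'

lemma sqrt_one_sub_sq_le_one (s : ℝ) : √(1 - s ^ 2) ≤ 1 :=
  Real.sqrt_le_one.2 (by nlinarith [sq_nonneg s])

lemma abs_le_abs_phi1 {s : ℝ} (hs : |s| < 1) : |s| ≤ |phi1 s| := by
  conv_lhs => rw [← sqrt_mul_phi1 hs]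
  rw [abs_mul, abs_of_pos (sqrt_one_sub_sq_pos hs)]
  exact mul_le_of_le_one_left (abs_nonneg _) (sqrt_one_sub_sq_le_one s)

lemma mul_sq_le_mul_of_lt_div_phi1 {s F M : ℝ} (hs : |s| < 1) (hs0 : s ≠ 0) (hM : 0 ≤ M)
    (h : M < F / phi1 s) : M * s ^ 2 ≤ s * F := by
  have hT := sqrt_one_sub_sq_pos hs
  have hT1 := sqrt_one_sub_sq_le_one s
  rw [phi1, div_div_eq_mul_div] at h
  rcases hs0.lt_or_gt with hneg | hpos
  · rw [lt_div_iff_of_neg hneg] at h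
    have hF : F < 0 := neg_of_mul_neg_left (h.trans_le (by nlinarith)) hT.le
    nlinarith [mul_le_mul_of_nonpos_left hT1 hF.le]
  · rw [lt_div_iff₀ hpos] at h
    have hF : 0 < F := pos_of_mul_pos_left ((by positivity : 0 ≤ M * s).trans_lt h) hT.le
    nlinarith [mul_le_mul_of_nonneg_left hT1 hF.le]

lemma hasDerivAt_mul_phi1 {ρ v : ℝ → ℝ} {r ρ' g : ℝ} (hρ : HasDerivAt ρ ρ' r) (hρr : ρ r ≠ 0)
    (hw : HasDerivAt (fun t => ρ t * v t) g r) (hv : |v r| < 1) :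
    HasDerivAt (fun t => ρ t * phi1 (v t)) ((g - ρ' * v r ^ 3) / hcap (v r)) r := by
  have hv' : HasDerivAt v ((g * ρ r - ρ r * v r * ρ') / ρ r ^ 2) r := by
    refine (hw.div hρ hρr).congr_of_eventuallyEq ?_
    filter_upwards [hρ.continuousAt.eventually_ne hρr] with t ht
    simp only [Pi.div_apply]
    field_simp
  refine (hρ.mul ((hasDerivAt_phi1 hv).comp r hv')).congr_deriv ?_
  have hT := sqrt_one_sub_sq_pos hv
  rw [hcap_eq_sqrt_pow hv.le]
  simp only [phi1, Function.comp_apply]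
  field_simp
  linear_combination ρ' * v r * sq_sqrt_one_sub_sq hv

lemma sub_le_mul_sub_of_hasDerivAt_le {f : ℝ → ℝ} {a b C : ℝ} (hab : a ≤ b)
    (hf : ContinuousOn f (Icc a b)) (hf' : ∀ x ∈ Ioo a b, ∃ f', HasDerivAt f f' x ∧ f' ≤ C) :
    f b - f a ≤ C * (b - a) := by
  rcases hab.eq_or_lt with rfl | hlt
  · simp
  obtain ⟨x, hx, hslope⟩ := exists_deriv_eq_slope f hlt hf
    fun x hx => (hf' x hx).choose_spec.1.differentiableAt.differentiableWithinAt
  obtain ⟨f', hderiv, hle⟩ := hf' x hx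
  rw [hderiv.deriv, eq_div_iff (sub_pos.2 hlt).ne'] at hslope
  rw [← hslope]
  exact mul_le_mul_of_nonneg_right hle (sub_pos.2 hlt).le

lemma abs_sub_le_mul_sub_of_hasDerivAt {f : ℝ → ℝ} {a b C : ℝ} (hab : a ≤ b)
    (hf : ContinuousOn f (Icc a b)) (hf' : ∀ x ∈ Ioo a b, ∃ f', HasDerivAt f f' x ∧ |f'| ≤ C) :
    |f b - f a| ≤ C * (b - a) := by
  refine abs_sub_le_iff.2 ⟨sub_le_mul_sub_of_hasDerivAt_le hab hf fun x hx => ?_, ?_⟩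
  · obtain ⟨f', hderiv, hle⟩ := hf' x hx
    exact ⟨f', hderiv, (le_abs_self f').trans hle⟩
  · have := sub_le_mul_sub_of_hasDerivAt_le hab hf.neg fun x hx => by
      obtain ⟨f', hderiv, hle⟩ := hf' x hx
      exact ⟨-f', hderiv.neg, (neg_le_abs f').trans hle⟩
    simp only [Pi.neg_apply] at this
    linarith

lemma antitoneOn_of_hasDerivAt_nonpos {f : ℝ → ℝ} {a b : ℝ} (hf : ContinuousOn f (Icc a b))
    (hf' : ∀ x ∈ Ioo a b, ∃ f', HasDerivAt f f' x ∧ f' ≤ 0) : AntitoneOn f (Icc a b) := by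
  intro x hx y hy hxy
  have := sub_le_mul_sub_of_hasDerivAt_le hxy (hf.mono (Icc_subset_Icc hx.1 hy.2))
    fun t ht => hf' t ⟨hx.1.trans_lt ht.1, ht.2.trans_le hy.2⟩
  linarith

lemma forall_lt_of_continuousOn_of_forall_le_imp_lt {v : ℝ → ℝ} {a b c : ℝ}
    (hv : ContinuousOn v (Icc a b)) (ha : v a < c)
    (h : ∀ τ ∈ Ioc a b, (∀ x ∈ Icc a τ, v x ≤ c) → v τ < c) : ∀ x ∈ Icc a b, v x < c := by
  by_contra! hcon
  obtain ⟨x, hx, hcx⟩ := hcon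
  set E := Icc a b ∩ v ⁻¹' Ici c
  have hE : IsClosed E := hv.preimage_isClosed_of_isClosed isClosed_Icc isClosed_Ici
  have hτ : sInf E ∈ E := hE.csInf_mem ⟨x, hx, hcx⟩ ⟨a, fun y hy => hy.1.1⟩
  have hbefore : ∀ y ∈ Ico a (sInf E), v y < c := fun y hy => not_le.1 fun hcy =>
    (csInf_le ⟨a, fun z hz => hz.1.1⟩ (⟨⟨hy.1, hy.2.le.trans hτ.1.2⟩, hcy⟩ : y ∈ E)).not_gt hy.2
  have haτ : a < sInf E := hτ.1.1.lt_of_ne fun heq => (heq ▸ hτ.2 : c ≤ v a).not_gt ha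
  refine (h _ ⟨haτ, hτ.1.2⟩ fun y hy => ?_).not_ge hτ.2
  have hcl : closure (Ico a (sInf E)) = Icc a (sInf E) := closure_Ico haτ.ne
  exact le_on_closure (fun z hz => (hbefore z hz).le)
    (hcl ▸ hv.mono (Icc_subset_Icc le_rfl hτ.1.2)) continuousOn_const (hcl ▸ hy)

lemma exists_forall_abs_lt_of_continuousOn {K : Set ℝ} (hK : IsCompact K) {f : ℝ → ℝ → ℝ}
    {ρ ε : ℝ} (hρ : 0 < ρ) (hε : 0 < ε)
    (hf : ContinuousOn (fun p : ℝ × ℝ => f p.1 p.2) (K ×ˢ Icc (-ρ) ρ))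
    (hf0 : ∀ r ∈ K, f r 0 = 0) : ∃ b > 0, ∀ r ∈ K, ∀ s, |s| < b → |f r s| < ε := by
  obtain ⟨δ, hδ, hfδ⟩ := Metric.uniformContinuousOn_iff.1
    ((hK.prod isCompact_Icc).uniformContinuousOn_of_continuous hf) ε hε
  refine ⟨min δ ρ, lt_min hδ hρ, fun r hr s hs => ?_⟩
  have hmem : ∀ t, |t| ≤ ρ → (r, t) ∈ K ×ˢ Icc (-ρ) ρ := fun t ht => ⟨hr, abs_le.1 ht⟩
  have := hfδ (r, s) (hmem s (hs.le.trans (min_le_right _ _))) (r, 0)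
    (hmem 0 (by simpa using hρ.le))
    (by simpa [Prod.dist_eq, Real.dist_eq] using hs.trans_le (min_le_left _ _))
  simpa [Real.dist_eq, hf0 r hr] using this

lemma exists_mem_Ico_forall_one_div_le {R : ℝ} (hR : 0 < R) :
    ∃ p ∈ Ico (R / 2) R, ∀ n : ℕ, 1 / (n : ℝ) < R → 1 / (n : ℝ) ≤ p := by
  set p₀ : ℝ := 1 / (⌊1 / R⌋₊ + 1)
  have hp₀R : p₀ < R := by
    rw [div_lt_iff₀ (by positivity), ← div_lt_iff₀' hR]
    exact Nat.lt_floor_add_one _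
  refine ⟨max (R / 2) p₀, ⟨le_max_left _ _, max_lt (by linarith) hp₀R⟩, fun n hn => ?_⟩
  refine le_max_of_le_right ?_
  rcases n.eq_zero_or_pos with rfl | hn0
  · simp only [CharP.cast_eq_zero, div_zero]
    positivity
  have hn' : 1 / R < n := by rwa [div_lt_iff₀ hR, ← div_lt_iff₀' (by exact_mod_cast hn0)]
  have : (⌊1 / R⌋₊ + 1 : ℝ) ≤ n := by exact_mod_cast Nat.floor_lt (by positivity) |>.2 hn'
  exact one_div_le_one_div_of_le (by positivity) this

lemma exists_Icc_notMem_of_card_lt (Z : Finset ℝ) {p q : ℝ} (hpq : p < q) {k : ℕ}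
    (hk : Z.card < k) : ∃ a, p < a ∧ a + (q - p) / (2 * k) < q ∧
      ∀ z ∈ Z, z ∉ Icc a (a + (q - p) / (2 * k)) := by
  have hk0 : (0 : ℝ) < k := by exact_mod_cast (Nat.zero_le _).trans_lt hk
  set W := (q - p) / k with hW
  have hWpos : 0 < W := div_pos (sub_pos.2 hpq) hk0
  obtain ⟨i, hi, hiZ⟩ := Finset.exists_mem_notMem_of_card_lt_card
    ((Finset.card_image_le (f := fun z => ⌊(z - p) / W⌋₊)).trans_lt
      (hk.trans_eq (Finset.card_range k).symm))
  have hik : (i : ℝ) + 1 ≤ k := by exact_mod_cast Finset.mem_range.1 hi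
  have hhalf : (q - p) / (2 * k) = W / 2 := by rw [hW]; field_simp
  refine ⟨p + i * W + W / 4, by nlinarith [i.cast_nonneg (α := ℝ)], ?_, fun z hz hzI => hiZ ?_⟩
  · have : q = p + k * W := by rw [hW]; field_simp; ring
    rw [hhalf]; nlinarith
  · rw [hhalf] at hzI
    refine Finset.mem_image.2 ⟨z, hz, (Nat.floor_eq_iff ?_).2 ⟨?_, ?_⟩⟩
    · exact div_nonneg (by nlinarith [hzI.1, i.cast_nonneg (α := ℝ)]) hWpos.le
    · rw [le_div_iff₀ hWpos]; linarith [hzI.1]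
    · rw [div_lt_iff₀ hWpos]; linarith [hzI.2]

/-- `u r * y' ≤ -(C * u r ^ 2)` is the sign-free form of `y' ≤ -C u`, which makes the notion
invariant under `(u, y) ↦ (-u, -y)`. -/
structure SturmPair (κ C a c : ℝ) (u y : ℝ → ℝ) : Prop where
  continuousOn_u : ContinuousOn u (Icc a c)
  continuousOn_y : ContinuousOn y (Icc a c)
  hasDerivAt_u : ∀ r ∈ Ioo a c, ∃ θ ≥ κ, HasDerivAt u (θ * y r) r
  hasDerivAt_y : ∀ r ∈ Ioo a c, ∃ y', HasDerivAt y y' r ∧ u r * y' ≤ -(C * u r ^ 2)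

namespace SturmPair

variable {κ C a c : ℝ} {u y : ℝ → ℝ}

lemma mono (h : SturmPair κ C a c u y) {a' c' : ℝ} (ha : a ≤ a') (hc : c' ≤ c) :
    SturmPair κ C a' c' u y where
  continuousOn_u := h.continuousOn_u.mono (Icc_subset_Icc ha hc)
  continuousOn_y := h.continuousOn_y.mono (Icc_subset_Icc ha hc)
  hasDerivAt_u r hr := h.hasDerivAt_u r (Ioo_subset_Ioo ha hc hr)
  hasDerivAt_y r hr := h.hasDerivAt_y r (Ioo_subset_Ioo ha hc hr)

lemma neg (h : SturmPair κ C a c u y) : SturmPair κ C a c (fun r => -u r) (fun r => -y r) where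
  continuousOn_u := h.continuousOn_u.neg
  continuousOn_y := h.continuousOn_y.neg
  hasDerivAt_u r hr := by
    obtain ⟨θ, hθ, hu⟩ := h.hasDerivAt_u r hr
    exact ⟨θ, hθ, hu.neg.congr_deriv (mul_neg θ (y r)).symm⟩
  hasDerivAt_y r hr := by
    obtain ⟨y', hy, hle⟩ := h.hasDerivAt_y r hr
    exact ⟨-y', hy.neg, by rwa [neg_mul_neg, neg_sq]⟩

lemma comp_neg (h : SturmPair κ C a c u y) :
    SturmPair κ C (-c) (-a) (fun r => u (-r)) (fun r => -y (-r)) where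
  continuousOn_u := h.continuousOn_u.comp continuousOn_neg fun r hr => by
    simp only [mem_Icc] at hr ⊢; constructor <;> linarith [hr.1, hr.2]
  continuousOn_y := (h.continuousOn_y.comp continuousOn_neg fun r hr => by
    simp only [mem_Icc] at hr ⊢; constructor <;> linarith [hr.1, hr.2]).neg
  hasDerivAt_u r hr := by
    obtain ⟨θ, hθ, hu⟩ := h.hasDerivAt_u (-r) ⟨by linarith [hr.2], by linarith [hr.1]⟩
    exact ⟨θ, hθ, (hu.comp r (hasDerivAt_neg r)).congr_deriv (by ring)⟩
  hasDerivAt_y r hr := by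
    obtain ⟨y', hy, hle⟩ := h.hasDerivAt_y (-r) ⟨by linarith [hr.2], by linarith [hr.1]⟩
    exact ⟨y', (hy.comp r (hasDerivAt_neg r)).neg.congr_deriv (by ring), hle⟩

lemma hasDerivAt_y_le (h : SturmPair κ C a c u y) (hu : ∀ r ∈ Icc a c, 0 < u r) :
    ∀ r ∈ Ioo a c, ∃ y', HasDerivAt y y' r ∧ y' ≤ -(C * u r) := fun r hr => by
  obtain ⟨y', hy, hle⟩ := h.hasDerivAt_y r hr
  have hur := hu r (Ioo_subset_Icc_self hr)
  exact ⟨y', hy, le_of_mul_le_mul_left (by nlinarith) hur⟩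

lemma antitoneOn_y (h : SturmPair κ C a c u y) (hC : 0 ≤ C) (hu : ∀ r ∈ Icc a c, 0 < u r) :
    AntitoneOn y (Icc a c) :=
  antitoneOn_of_hasDerivAt_nonpos h.continuousOn_y fun r hr => by
    obtain ⟨y', hy, hle⟩ := h.hasDerivAt_y_le hu r hr
    exact ⟨y', hy, hle.trans (by nlinarith [hu r (Ioo_subset_Icc_self hr)])⟩

lemma antitoneOn_u (h : SturmPair κ C a c u y) (hκ : 0 ≤ κ) (hy : ∀ r ∈ Icc a c, y r ≤ 0) :
    AntitoneOn u (Icc a c) :=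
  antitoneOn_of_hasDerivAt_nonpos h.continuousOn_u fun r hr => by
    obtain ⟨θ, hθ, hu'⟩ := h.hasDerivAt_u r hr
    exact ⟨_, hu', mul_nonpos_of_nonneg_of_nonpos (hκ.trans hθ) (hy r (Ioo_subset_Icc_self hr))⟩

/-- Once `y(a) ≤ 0`, both `y` and `u` decrease; `y` then drops by `C u(m) (m - a)` on the first
half `[a, m]`, which makes `u` drop by more than `u(m)` on the second half. -/
lemma exists_nonpos_of_nonpos_left (h : SturmPair κ C a c u y) (hac : a < c) (hκ : 0 ≤ κ)
    (hL : 4 < κ * C * (c - a) ^ 2) (hya : y a ≤ 0) : ∃ r ∈ Icc a c, u r ≤ 0 := by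
  by_contra! hu
  have hC : 0 < C := pos_of_mul_pos_right (by nlinarith [sq_nonneg (c - a)] : 0 < κ * C) hκ
  have hy_anti := h.antitoneOn_y hC.le hu
  have hy_nonpos : ∀ r ∈ Icc a c, y r ≤ 0 := fun r hr =>
    (hy_anti ⟨le_rfl, hac.le⟩ hr hr.1).trans hya
  have hu_anti := h.antitoneOn_u hκ hy_nonpos
  obtain ⟨m, hma, hcm⟩ : ∃ m, m - a = (c - a) / 2 ∧ c - m = (c - a) / 2 :=
    ⟨(a + c) / 2, by ring, by ring⟩
  have hm : m ∈ Icc a c := ⟨by linarith, by linarith⟩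
  have hym : y m - y a ≤ -(C * u m) * (m - a) :=
    sub_le_mul_sub_of_hasDerivAt_le hm.1 (h.continuousOn_y.mono (Icc_subset_Icc le_rfl hm.2))
      fun r hr => by
        obtain ⟨y', hy, hle⟩ := h.hasDerivAt_y_le hu r ⟨hr.1, hr.2.trans_le hm.2⟩
        have : u m ≤ u r := hu_anti ⟨hr.1.le, hr.2.le.trans hm.2⟩ hm hr.2.le
        exact ⟨y', hy, hle.trans (by nlinarith)⟩
  have huc : u c - u m ≤ κ * y m * (c - m) :=
    sub_le_mul_sub_of_hasDerivAt_le hm.2 (h.continuousOn_u.mono (Icc_subset_Icc hm.1 le_rfl))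
      fun r hr => by
        have hr' : r ∈ Icc a c := ⟨hm.1.trans hr.1.le, hr.2.le⟩
        obtain ⟨θ, hθ, hu'⟩ := h.hasDerivAt_u r ⟨hm.1.trans_lt hr.1, hr.2⟩
        have hyr : y r ≤ y m := hy_anti hm hr' hr.1.le
        have hyr0 := hy_nonpos r hr'
        exact ⟨_, hu', by nlinarith⟩
  have hdecay : κ * y m * (c - m) ≤ -(κ * C * (c - a) ^ 2 / 4 * u m) :=
    calc κ * y m * (c - m) ≤ κ * (-(C * u m) * (m - a)) * (c - m) := by gcongr <;> linarith
      _ = -(κ * C * (c - a) ^ 2 / 4 * u m) := by rw [hma, hcm]; ring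
  nlinarith [hu c ⟨hac.le, le_rfl⟩, mul_lt_mul_of_pos_right hL (hu m hm)]

lemma exists_nonpos (h : SturmPair κ C a c u y) (hac : a < c) (hκ : 0 ≤ κ)
    (hL : 16 < κ * C * (c - a) ^ 2) : ∃ r ∈ Icc a c, u r ≤ 0 := by
  obtain ⟨m, hma, hcm⟩ : ∃ m, m - a = (c - a) / 2 ∧ c - m = (c - a) / 2 :=
    ⟨(a + c) / 2, by ring, by ring⟩
  have hL' : 4 < κ * C * ((c - a) / 2) ^ 2 := by nlinarith
  rcases le_or_gt (y m) 0 with hym | hym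
  · obtain ⟨r, hr, hur⟩ := (h.mono (by linarith) le_rfl).exists_nonpos_of_nonpos_left
      (by linarith) hκ (by rwa [hcm]) hym
    exact ⟨r, ⟨by linarith [hr.1], hr.2⟩, hur⟩
  · obtain ⟨r, hr, hur⟩ :=
      (h.mono le_rfl (by linarith : m ≤ c)).comp_neg.exists_nonpos_of_nonpos_left
        (by linarith) hκ (by rwa [neg_sub_neg, hma]) (by simp only [neg_neg]; linarith)
    exact ⟨-r, ⟨by linarith [hr.2], by linarith [hr.1]⟩, hur⟩

lemma exists_eq_zero (h : SturmPair κ C a c u y) (hac : a < c) (hκ : 0 ≤ κ)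
    (hL : 16 < κ * C * (c - a) ^ 2) : ∃ r ∈ Icc a c, u r = 0 := by
  wlog hua : 0 ≤ u a generalizing u y
  · obtain ⟨r, hr, hur⟩ := this h.neg (by linarith)
    exact ⟨r, hr, neg_eq_zero.1 hur⟩
  obtain ⟨r, hr, hur⟩ := h.exists_nonpos hac hκ hL
  obtain ⟨x, hx, hux⟩ := intermediate_value_Icc' hr.1 (h.continuousOn_u.mono
    (Icc_subset_Icc le_rfl hr.2)) ⟨hur, hua⟩
  exact ⟨x, ⟨hx.1, hx.2.trans hr.2⟩, hux⟩

end SturmPair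

/-- The radial equation of the theorem, with its source term `g_n(r, u(r))` abstracted to `G r`. -/
structure IsRadialSol (N : ℕ) (R lam : ℝ) (G u u' : ℝ → ℝ) : Prop where
  hasDerivWithinAt : ∀ r ∈ Icc 0 R, HasDerivWithinAt u (u' r) (Icc 0 R) r
  continuousOn_deriv : ContinuousOn u' (Icc 0 R)
  flux : ∃ g : ℝ → ℝ,
    (∀ r ∈ Icc 0 R, HasDerivWithinAt (fun t => t ^ (N - 1) * u' t) (g r) (Icc 0 R) r) ∧
    ∀ r ∈ Ioo 0 R, -g r + (N - 1 : ℝ) * r ^ (N - 2) * u' r ^ 3 =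
      lam * r ^ (N - 1) * G r * hcap (u' r)
  deriv_zero : u' 0 = 0

namespace IsRadialSol

variable {N : ℕ} {R lam : ℝ} {G u u' : ℝ → ℝ}

lemma continuousOn (hs : IsRadialSol N R lam G u u') : ContinuousOn u (Icc 0 R) :=
  fun r hr => (hs.hasDerivWithinAt r hr).continuousWithinAt

lemma hasDerivAt (hs : IsRadialSol N R lam G u u') {r : ℝ} (hr : r ∈ Ioo 0 R) :
    HasDerivAt u (u' r) r :=
  (hs.hasDerivWithinAt r (Ioo_subset_Icc_self hr)).hasDerivAt (Icc_mem_nhds hr.1 hr.2)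

lemma hasDerivAt_flux (hs : IsRadialSol N R lam G u u') (hN : 2 ≤ N) {r : ℝ}
    (hr : r ∈ Ioo 0 R) (hr1 : |u' r| < 1) :
    HasDerivAt (fun t => t ^ (N - 1) * phi1 (u' t)) (-(lam * r ^ (N - 1) * G r)) r := by
  obtain ⟨g, hg, heq⟩ := hs.flux
  refine (hasDerivAt_mul_phi1 (hasDerivAt_pow (N - 1) r) (pow_ne_zero _ hr.1.ne')
    ((hg r (Ioo_subset_Icc_self hr)).hasDerivAt (Icc_mem_nhds hr.1 hr.2)) hr1).congr_deriv ?_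
  have hh : hcap (u' r) ≠ 0 := by
    rw [hcap_eq_sqrt_pow hr1.le]
    exact pow_ne_zero _ (sqrt_one_sub_sq_pos hr1).ne'
  rw [div_eq_iff hh, Nat.cast_sub (by omega : 1 ≤ N), Nat.cast_one,
    show N - 1 - 1 = N - 2 by omega]
  linear_combination -heq r hr

lemma abs_deriv_le_of_forall_abs_lt_one (hs : IsRadialSol N R lam G u u') (hN : 2 ≤ N)
    (hlam : 0 ≤ lam) {S : ℝ} (hG : ∀ r ∈ Icc 0 R, |G r| ≤ S) {τ : ℝ} (hτ : τ ∈ Icc 0 R)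
    (h1 : ∀ x ∈ Icc 0 τ, |u' x| < 1) : |u' τ| ≤ lam * S * τ := by
  rcases hτ.1.eq_or_lt with rfl | hτ0
  · simp [hs.deriv_zero]
  have hsub : Icc 0 τ ⊆ Icc 0 R := Icc_subset_Icc le_rfl hτ.2
  have hy := abs_sub_le_mul_sub_of_hasDerivAt hτ.1 (f := fun t => t ^ (N - 1) * phi1 (u' t))
    (C := lam * S * τ ^ (N - 1))
    ((continuousOn_pow _).mul ((hs.continuousOn_deriv.mono hsub).phi1 h1)) fun x hx => by
      have hx' := Ioo_subset_Icc_self hx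
      refine ⟨_, hs.hasDerivAt_flux hN ⟨hx.1, hx.2.trans_le hτ.2⟩ (h1 x hx'), ?_⟩
      have hGx := hG x (hsub hx')
      rw [abs_neg, abs_mul, abs_mul, abs_of_nonneg hlam, abs_of_pos (pow_pos hx.1 _),
        mul_right_comm]
      exact mul_le_mul (mul_le_mul_of_nonneg_left hGx hlam) (pow_le_pow_left₀ hx.1.le hx.2.le _)
        (pow_nonneg hx.1.le _) (mul_nonneg hlam ((abs_nonneg _).trans hGx))
  rw [zero_pow (by omega), zero_mul, sub_zero, sub_zero, abs_mul, abs_of_pos (pow_pos hτ0 _)] at hy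
  have hpow : 0 < τ ^ (N - 1) := pow_pos hτ0 _
  nlinarith [abs_le_abs_phi1 (h1 τ ⟨hτ.1, le_rfl⟩)]

lemma abs_deriv_lt_half (hs : IsRadialSol N R lam G u u') (hN : 2 ≤ N) (hlam : 0 ≤ lam) {S : ℝ}
    (hG : ∀ r ∈ Icc 0 R, |G r| ≤ S) (hSR : 2 * lam * S * R < 1) :
    ∀ r ∈ Icc 0 R, |u' r| < 1 / 2 :=
  forall_lt_of_continuousOn_of_forall_le_imp_lt hs.continuousOn_deriv.abs
    (by simp [hs.deriv_zero]) fun τ hτ hle => by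
      have hS : 0 ≤ S := (abs_nonneg _).trans (hG τ (Ioc_subset_Icc_self hτ))
      have := hs.abs_deriv_le_of_forall_abs_lt_one hN hlam hG (Ioc_subset_Icc_self hτ)
        fun x hx => (hle x hx).trans_lt (by norm_num)
      nlinarith [mul_le_mul_of_nonneg_left hτ.2 (mul_nonneg hlam hS)]

lemma abs_deriv_le (hs : IsRadialSol N R lam G u u') (hN : 2 ≤ N) (hlam : 0 ≤ lam) {S : ℝ}
    (hG : ∀ r ∈ Icc 0 R, |G r| ≤ S) (hSR : 2 * lam * S * R < 1) :
    ∀ r ∈ Icc 0 R, |u' r| ≤ lam * S * r := fun r hr =>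
  hs.abs_deriv_le_of_forall_abs_lt_one hN hlam hG hr fun x hx =>
    (hs.abs_deriv_lt_half hN hlam hG hSR x ⟨hx.1, hx.2.trans hr.2⟩).trans (by norm_num)

lemma eq_zero_of_forall_eq_zero (hs : IsRadialSol N R lam G u u') (hN : 2 ≤ N) (hlam : 0 ≤ lam)
    (hG : ∀ r ∈ Icc 0 R, G r = 0) (huR : u R = 0) : ∀ r ∈ Icc 0 R, u r = 0 := by
  have hu' : ∀ r ∈ Icc 0 R, u' r = 0 := fun r hr => abs_nonpos_iff.1 <| by
    simpa using hs.abs_deriv_le hN hlam (S := 0) (by simpa using hG) (by simp) r hr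
  intro r hr
  have := abs_sub_le_mul_sub_of_hasDerivAt hr.2 (C := 0)
    (hs.continuousOn.mono (Icc_subset_Icc hr.1 le_rfl)) fun x hx =>
      ⟨u' x, hs.hasDerivAt ⟨hr.1.trans_lt hx.1, hx.2⟩,
        by simp [hu' x ⟨(hr.1.trans_lt hx.1).le, hx.2.le⟩]⟩
  simpa [huR, sub_eq_zero, eq_comm] using this

lemma sturmPair (hs : IsRadialSol N R lam G u u') (hN : 2 ≤ N) (hlam : 0 ≤ lam) {M a c : ℝ}
    (hM : 0 ≤ M) (ha : 0 < a) (hc : c < R) (hslope : ∀ r ∈ Icc a c, |u' r| ≤ 1 / 2)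
    (hG : ∀ r ∈ Ioo a c, M * u r ^ 2 ≤ u r * G r) :
    SturmPair (1 / (2 * c ^ (N - 1))) (lam * a ^ (N - 1) * M) a c u
      (fun t => t ^ (N - 1) * phi1 (u' t)) := by
  have hsub : Icc a c ⊆ Icc 0 R := Icc_subset_Icc ha.le hc.le
  have hsub' : Ioo a c ⊆ Ioo 0 R := Ioo_subset_Ioo ha.le hc.le
  have h1 : ∀ r ∈ Icc a c, |u' r| < 1 := fun r hr => (hslope r hr).trans_lt (by norm_num)
  refine ⟨hs.continuousOn.mono hsub,
    (continuousOn_pow _).mul ((hs.continuousOn_deriv.mono hsub).phi1 h1), fun r hr => ?_,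
    fun r hr => ⟨_, hs.hasDerivAt_flux hN (hsub' hr) (h1 r (Ioo_subset_Icc_self hr)), ?_⟩⟩
  · have hr0 : 0 < r := ha.trans hr.1
    have hsqrt : 1 / 2 ≤ √(1 - u' r ^ 2) := Real.le_sqrt_of_sq_le <| by
      nlinarith [sq_abs (u' r), abs_nonneg (u' r), hslope r (Ioo_subset_Icc_self hr)]
    refine ⟨√(1 - u' r ^ 2) / r ^ (N - 1), ?_, (hs.hasDerivAt (hsub' hr)).congr_deriv ?_⟩
    · have hrc : r ^ (N - 1) ≤ c ^ (N - 1) := pow_le_pow_left₀ hr0.le hr.2.le _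
      calc 1 / (2 * c ^ (N - 1)) = 1 / 2 / c ^ (N - 1) := by rw [div_div]
        _ ≤ √(1 - u' r ^ 2) / c ^ (N - 1) := by gcongr; exact pow_nonneg (hr0.trans hr.2).le _
        _ ≤ √(1 - u' r ^ 2) / r ^ (N - 1) := by gcongr
    · rw [div_mul_eq_mul_div, mul_comm (r ^ (N - 1)), ← mul_assoc, mul_div_assoc,
        div_self (pow_ne_zero _ hr0.ne'), mul_one]
      exact (sqrt_mul_phi1 (h1 r (Ioo_subset_Icc_self hr))).symm
  · have hr0 : 0 < r := ha.trans hr.1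
    have hpow : a ^ (N - 1) ≤ r ^ (N - 1) := pow_le_pow_left₀ ha.le hr.1.le _
    nlinarith [mul_le_mul_of_nonneg_left (hG r hr) (mul_nonneg hlam (pow_pos hr0 (N - 1)).le),
      mul_le_mul_of_nonneg_right hpow (mul_nonneg (mul_nonneg hlam hM) (sq_nonneg (u r)))]

lemma exists_eq_zero_of_superlinear (hs : IsRadialSol N R lam G u u') (hN : 2 ≤ N)
    (hlam : 0 ≤ lam) {M ℓ a : ℝ} (hM0 : 0 ≤ M)
    (hM : 32 * R ^ (N - 1) < lam * (R / 2) ^ (N - 1) * M * ℓ ^ 2) (ha : R / 2 ≤ a) (hℓ : 0 < ℓ)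
    (hc : a + ℓ < R) (hslope : ∀ r ∈ Icc a (a + ℓ), |u' r| ≤ 1 / 2)
    (hG : ∀ r ∈ Ioo a (a + ℓ), M * u r ^ 2 ≤ u r * G r) : ∃ r ∈ Icc a (a + ℓ), u r = 0 := by
  have hR : 0 < R := by linarith
  have ha0 : 0 < a := by linarith
  have hc0 : 0 < (a + ℓ) ^ (N - 1) := pow_pos (by linarith) _
  refine (hs.sturmPair hN hlam hM0 ha0 hc hslope hG).exists_eq_zero (by linarith)
    (by positivity) ?_
  calc (16 : ℝ) = 32 * R ^ (N - 1) / (2 * R ^ (N - 1)) := by field_simp; norm_num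
    _ < lam * (R / 2) ^ (N - 1) * M * ℓ ^ 2 / (2 * R ^ (N - 1)) := by gcongr
    _ ≤ lam * a ^ (N - 1) * M * ℓ ^ 2 / (2 * (a + ℓ) ^ (N - 1)) := by gcongr
    _ = 1 / (2 * (a + ℓ) ^ (N - 1)) * (lam * a ^ (N - 1) * M) * (a + ℓ - a) ^ 2 := by ring

end IsRadialSol

lemma CondA3.exists_mul_sq_le {R : ℝ} {f : ℝ → ℝ → ℝ} (hA3 : CondA3 0 R f) {M : ℝ} (hM : 0 ≤ M) :
    ∃ η > 0, ∀ r ∈ Icc 0 R, ∀ s, s ≠ 0 → |s| < η → M * s ^ 2 ≤ s * f r s := by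
  obtain ⟨η, hη, hf⟩ := hA3.2 M
  exact ⟨min η 1, by positivity, fun r hr s hs hsη => mul_sq_le_mul_of_lt_div_phi1
    (hsη.trans_le (min_le_right _ _)) hs hM (hf r hr s hs (hsη.trans_le (min_le_left _ _)))⟩

lemma CondA1.exists_forall_abs_lt {R : ℝ} {α : EReal} {f : ℝ → ℝ → ℝ} (hA1 : CondA1 R α f)
    (hR : 0 < R) (hf0 : ∀ r ∈ Icc 0 R, f r 0 = 0) {ε : ℝ} (hε : 0 < ε) :
    ∃ b > 0, ∀ r ∈ Icc 0 R, ∀ s, |s| < b → |f r s| < ε := by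
  refine exists_forall_abs_lt_of_continuousOn isCompact_Icc hR hε (hA1.2.1.mono ?_) hf0
  rintro ⟨r, s⟩ ⟨hr, hs⟩
  exact ⟨hr, (EReal.coe_le_coe_iff.2 (abs_le.2 hs)).trans_lt hA1.1⟩

/-- The paper's `g_n(r, s)`. -/
noncomputable def truncatedSource (f : ℝ → ℝ → ℝ) (n : ℕ) (r s : ℝ) : ℝ :=
  if r ≤ 1 / (n : ℝ) then 0 else f (r - 1 / (n : ℝ)) s

lemma truncatedSource_of_lt {f : ℝ → ℝ → ℝ} {n : ℕ} {r : ℝ} (hr : 1 / (n : ℝ) < r) (s : ℝ) :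
    truncatedSource f n r s = f (r - 1 / (n : ℝ)) s :=
  if_neg hr.not_ge

lemma abs_truncatedSource_lt {f : ℝ → ℝ → ℝ} {R b ε : ℝ} (hε : 0 < ε)
    (hf : ∀ r ∈ Icc 0 R, ∀ s, |s| < b → |f r s| < ε) (n : ℕ) {r s : ℝ} (hr : r ∈ Icc 0 R)
    (hs : |s| < b) : |truncatedSource f n r s| < ε := by
  unfold truncatedSource
  split_ifs with hrn
  · simpa using hε
  · have hn : 0 ≤ 1 / (n : ℝ) := by positivity
    exact hf _ ⟨by linarith [not_le.1 hrn], by linarith [hr.2]⟩ s hs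

lemma mul_sq_le_mul_truncatedSource {f : ℝ → ℝ → ℝ} {R η M : ℝ}
    (hf : ∀ r ∈ Icc 0 R, ∀ s, s ≠ 0 → |s| < η → M * s ^ 2 ≤ s * f r s) {n : ℕ} {r s : ℝ}
    (hr : 1 / (n : ℝ) < r) (hrR : r ≤ R) (hs : s ≠ 0) (hsη : |s| < η) :
    M * s ^ 2 ≤ s * truncatedSource f n r s := by
  have hn : 0 ≤ 1 / (n : ℝ) := by positivity
  rw [truncatedSource_of_lt hr]
  exact hf _ ⟨by linarith, by linarith⟩ s hs hsη

lemma IsRadialSol.one_div_lt {N : ℕ} {R lam : ℝ} {f : ℝ → ℝ → ℝ} {n : ℕ} {u u' : ℝ → ℝ}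
    (hs : IsRadialSol N R lam (fun r => truncatedSource f n r (u r)) u u') (hN : 2 ≤ N)
    (hlam : 0 ≤ lam) (hR : 0 < R) (huR : u R = 0) {Z : Finset ℝ}
    (hZ : ∀ r, r ∈ Z ↔ r ∈ Ioo 0 R ∧ u r = 0) : 1 / (n : ℝ) < R := by
  by_contra! hRn
  have hu0 := hs.eq_zero_of_forall_eq_zero hN hlam (fun r hr => if_pos (hr.2.trans hRn)) huR
  exact (Ioo_infinite hR).mono (fun r hr => (hZ r).2 ⟨hr, hu0 r (Ioo_subset_Icc_self hr)⟩)
    Z.finite_toSet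

/-- Lemma 4.2. Under (A1) and (A3) (with `δ = 0`), for any
`λ̂ > 0` the nodal solutions in `S_{k,0}` of the truncated problems `(4.7)_n`
are uniformly bounded away from zero: `sup |u| ≥ b̂` with `b̂` independent of
`n` and `u`. -/
theorem stmt15 (N : ℕ) (hN : 2 ≤ N) (R : ℝ) (hR : 0 < R)
    (α : EReal) (f : ℝ → ℝ → ℝ)
    (hA1 : CondA1 R α f) (hA3 : CondA3 0 R f)
    (k : ℕ) (hk : 1 ≤ k) (lam : ℝ) (hlam : 0 < lam) :
    ∃ b : ℝ, 0 < b ∧ ∀ n : ℕ, 1 ≤ n → ∀ u u' : ℝ → ℝ,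
      (∀ r ∈ Icc (0:ℝ) R, HasDerivWithinAt u (u' r) (Icc (0:ℝ) R) r) →
      ContinuousOn u' (Icc (0:ℝ) R) →
      (∃ g : ℝ → ℝ, ContinuousOn g (Icc (0:ℝ) R) ∧
        (∀ r ∈ Icc (0:ℝ) R,
          HasDerivWithinAt (fun t => t ^ (N - 1) * u' t) (g r) (Icc (0:ℝ) R) r) ∧
        ∀ r ∈ Ioo (0:ℝ) R, -g r + (N - 1 : ℝ) * r ^ (N - 2) * (u' r) ^ 3 =
          lam * r ^ (N - 1) * (if r ≤ 1 / (n : ℝ) then 0 else f (r - 1 / (n : ℝ)) (u r))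
            * hcap (u' r)) →
      u' 0 = 0 → u R = 0 →
      -- u ∈ S_{k,0}
      (∃ Z : Finset ℝ, Z.card = k - 1 ∧
        (∀ r : ℝ, r ∈ Z ↔ r ∈ Ioo (0:ℝ) R ∧ u r = 0) ∧ ∀ r ∈ Z, u' r ≠ 0) →
      (∃ σ : ℝ, 0 < σ ∧
        ((∀ r ∈ Ioo (0:ℝ) σ, 0 < u r) ∨ ∀ r ∈ Ioo (0:ℝ) σ, u r < 0)) →
      ∃ r ∈ Icc (0:ℝ) R, b ≤ |u r| := by
  obtain ⟨p, ⟨hRp, hpR⟩, hp⟩ := exists_mem_Ico_forall_one_div_le hR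
  set ℓ := (R - p) / (2 * k) with hℓ_def
  have hℓ : 0 < ℓ := div_pos (by linarith) (by positivity)
  obtain ⟨M, hM⟩ := exists_nat_gt (32 * R ^ (N - 1) / (lam * (R / 2) ^ (N - 1) * ℓ ^ 2))
  rw [div_lt_iff₀ (by positivity)] at hM
  obtain ⟨η, hη, hfM⟩ := hA3.exists_mul_sq_le M.cast_nonneg
  obtain ⟨b, hb, hfb⟩ := hA1.exists_forall_abs_lt hR hA3.1 (ε := 1 / (4 * lam * R)) (by positivity)
  refine ⟨min b η, lt_min hb hη, fun n _ u u' hu hu' hflux hu'0 huR hZ' _ => ?_⟩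
  obtain ⟨g, -, hg, heq⟩ := hflux
  obtain ⟨Z, hZcard, hZ, -⟩ := hZ'
  by_contra! hsmall
  have hs : IsRadialSol N R lam (fun r => truncatedSource f n r (u r)) u u' :=
    ⟨hu, hu', ⟨g, hg, heq⟩, hu'0⟩
  have hslope := hs.abs_deriv_lt_half hN hlam.le (fun r hr => (abs_truncatedSource_lt
    (by positivity) hfb n hr ((hsmall r hr).trans_le (min_le_left _ _))).le)
    (by field_simp; norm_num)
  obtain ⟨a, hpa, hcR, hfree⟩ := exists_Icc_notMem_of_card_lt Z hpR (k := k) (by omega)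
  rw [← hℓ_def] at hcR hfree
  have hna : 1 / (n : ℝ) < a := (hp n (hs.one_div_lt hN hlam.le hR huR hZ)).trans_lt hpa
  have hIoo : ∀ r ∈ Icc a (a + ℓ), r ∈ Ioo 0 R := fun r hr =>
    ⟨by linarith [hr.1], by linarith [hr.2]⟩
  have hne : ∀ r ∈ Icc a (a + ℓ), u r ≠ 0 := fun r hr h0 => hfree r ((hZ r).2 ⟨hIoo r hr, h0⟩) hr
  obtain ⟨r, hr, hur⟩ := hs.exists_eq_zero_of_superlinear hN hlam.le M.cast_nonneg (by linarith)
    (hRp.trans hpa.le) hℓ hcR (fun r hr => (hslope r (Ioo_subset_Icc_self (hIoo r hr))).le)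
    fun r hr => mul_sq_le_mul_truncatedSource hfM (hna.trans hr.1) (by linarith [hr.2])
      (hne r (Ioo_subset_Icc_self hr))
      ((hsmall r (Ioo_subset_Icc_self (hIoo r (Ioo_subset_Icc_self hr)))).trans_le
        (min_le_right _ _))
  exact hne r hr hur
end
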